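/- arXiv:2412.16035 — 4 statements merged into one kernel-verified Lean document; each statement's English description precedes it below -/
import Mathlib

section
/- The map sending a rooted planar tree τ with k leaves v_1 < ... < v_k (in lexicographic order) to the pair of vectors (ℓ, b), where ℓ_i = |v_i| is the generation of the i-th leaf and b_i = |v_i ∧ v_{i+1}| is the generation of the most recent common ancestor of consecutive leaves, is a bijection from the set of planar trees with k leaves onto the set {(ℓ, b) ∈ ℕ^k × ℕ^{k-1} : b_i < min(ℓ_i, ℓ_{i+1}) for all i < k}. -/
open scoped Classical

noncomputable section

/-- A (finite) rooted planar tree, encoded as a prefix-closed finite set of words over ℕ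
containing the root `[]`, in which the children of every vertex are indexed by
consecutive integers `0, …, d-1`. -/
def IsPlanarTree (τ : Finset (List ℕ)) : Prop :=
  [] ∈ τ ∧ (∀ v w : List ℕ, v <+: w → w ∈ τ → v ∈ τ) ∧
    ∀ v : List ℕ, ∃ d : ℕ, ∀ i : ℕ, v ++ [i] ∈ τ ↔ i < d

/-- The leaves of a set of words: its maximal elements for the prefix order
(for a planar tree, exactly the vertices with out-degree 0). -/
def leavesOf (s : Finset (List ℕ)) : Finset (List ℕ) :=
  s.filter fun v => ∀ w ∈ s, v <+: w → w = v

/-- Length of the longest common prefix of two words (generation of the MRCA). -/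
def commonPrefixLen : List ℕ → List ℕ → ℕ
  | a :: v, b :: w => if a = b then commonPrefixLen v w + 1 else 0
  | _, _ => 0

/-- The `i`-th leaf of a tree with `k` leaves, in lexicographic order. -/
def leafVec (τ : Finset (List ℕ)) {k : ℕ} (h : (leavesOf τ).card = k) (i : Fin k) :
    List ℕ :=
  ((leavesOf τ).orderIsoOfFin h i : List ℕ)

/-!
If consecutive leaves `u < w` of a planar tree branch at generation `b`, then `w` agrees with
`u` up to generation `b`, takes the next sibling `u_b + 1` there and then descends through
first children (label `0`) down to its own generation: any other shape would leave room for a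
leaf strictly between `u` and `w`. Likewise the first leaf is `0 ⋯ 0`. Hence the leaves, and
with them the tree (the prefix closure of its leaves), are determined by `(ℓ, b)`. Conversely,
every admissible `(ℓ, b)` produces by the same rule a lexicographically increasing sequence of
pairwise prefix-incomparable words whose prefix closure is a planar tree with exactly these
leaves.
-/

namespace List

variable {α : Type*}

theorem append_cons_lt_append_cons [LinearOrder α] (p : List α) {a c : α} (hac : a < c)
    (s t : List α) : p ++ a :: s < p ++ c :: t :=
  Lex.append_left _ (Lex.rel hac) p

theorem not_prefix_append_cons {p s t : List α} {a c : α} (hac : a ≠ c) :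
    ¬ p ++ a :: s <+: p ++ c :: t := by
  simp [hac]

theorem Lex.exists_append_cons {r : α → α → Prop} {u w : List α} (h : Lex r u w)
    (hp : ¬ u <+: w) : ∃ p a c s t, r a c ∧ u = p ++ a :: s ∧ w = p ++ c :: t := by
  induction h with
  | nil => exact absurd (nil_prefix) hp
  | @cons a u w _ ih =>
    obtain ⟨p, b, c, s, t, hbc, rfl, rfl⟩ := ih (fun h => hp (by simpa using h))
    exact ⟨a :: p, b, c, s, t, hbc, rfl, rfl⟩
  | @rel a u c w hac => exact ⟨[], a, c, u, w, hac, rfl, rfl⟩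

theorem not_prefix_of_lt_of_lt [LinearOrder α] {u v w : List α} (huv : u < v) (hvw : v < w)
    (h : ¬ u <+: v) : ¬ u <+: w := by
  rintro ⟨r, rfl⟩
  obtain ⟨p, a, c, s, t, hac, rfl, rfl⟩ := Lex.exists_append_cons huv h
  exact lt_asymm hvw (by simpa using append_cons_lt_append_cons p hac (s ++ r) t)

theorem append_singleton_prefix_append_cons {x p z : List α} {e c : α}
    (h : x ++ [e] <+: p ++ c :: z) : x ++ [e] <+: p ∨ (x = p ∧ e = c) ∨ e ∈ z := by
  induction p generalizing x with
  | nil =>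
    cases x with
    | nil => simp_all
    | cons y x =>
      simp only [cons_append, nil_append, cons_prefix_cons] at h
      exact Or.inr (Or.inr (h.2.subset (by simp)))
  | cons a p ih =>
    cases x with
    | nil => simp_all
    | cons y x =>
      simp only [cons_append, cons_prefix_cons, cons.injEq] at h ⊢
      obtain ⟨rfl, h⟩ := h
      simpa using ih h

theorem exists_eq_append_cons_of_lt_length {v : List α} {b : ℕ} (hb : b < v.length) :
    ∃ p a s, v = p ++ a :: s ∧ p.length = b :=
  ⟨v.take b, v[b], v.drop (b + 1), by simp, by simp [hb.le]⟩

end List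

theorem commonPrefixLen_append_cons (p : List ℕ) {a c : ℕ} (hac : a ≠ c) (s t : List ℕ) :
    commonPrefixLen (p ++ a :: s) (p ++ c :: t) = p.length := by
  induction p with
  | nil => simp [commonPrefixLen, hac]
  | cons x p ih => simp [commonPrefixLen, ih]

theorem commonPrefixLen_lt_length {u w : List ℕ} (huw : u < w) (h : ¬ u <+: w) :
    commonPrefixLen u w < u.length ∧ commonPrefixLen u w < w.length := by
  obtain ⟨p, a, c, s, t, hac, rfl, rfl⟩ := List.Lex.exists_append_cons huw h
  simp [commonPrefixLen_append_cons p (ne_of_lt hac)]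

section Leaves

variable {s : Finset (List ℕ)} {v x y : List ℕ}

theorem mem_of_mem_leavesOf (hx : x ∈ leavesOf s) : x ∈ s :=
  (Finset.mem_filter.1 hx).1

theorem exists_mem_leavesOf_prefix (hv : v ∈ s) : ∃ x ∈ leavesOf s, v <+: x := by
  obtain ⟨x, hx, hmax⟩ := (s.filter (v <+: ·)).exists_max_image List.length ⟨v, by simp [hv]⟩
  simp only [Finset.mem_filter] at hx hmax
  refine ⟨x, Finset.mem_filter.2 ⟨hx.1, fun y hy hxy => ?_⟩, hx.2⟩
  exact (hxy.eq_of_length_le (hmax y ⟨hy, hx.2.trans hxy⟩)).symm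

theorem not_prefix_of_mem_leavesOf (hx : x ∈ leavesOf s) (hy : y ∈ s) (hxy : x ≠ y) :
    ¬ x <+: y :=
  fun h => hxy ((Finset.mem_filter.1 hx).2 y hy h).symm

theorem mem_iff_exists_mem_leavesOf_prefix (hs : ∀ v w, v <+: w → w ∈ s → v ∈ s) :
    v ∈ s ↔ ∃ x ∈ leavesOf s, v <+: x :=
  ⟨exists_mem_leavesOf_prefix, fun ⟨x, hx, hvx⟩ => hs v x hvx (mem_of_mem_leavesOf hx)⟩

end Leaves

theorem isPlanarTree_of_append_succ_mem {τ : Finset (List ℕ)} (hroot : [] ∈ τ)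
    (hpre : ∀ v w : List ℕ, v <+: w → w ∈ τ → v ∈ τ)
    (hsucc : ∀ (v : List ℕ) (j : ℕ), v ++ [j + 1] ∈ τ → v ++ [j] ∈ τ) : IsPlanarTree τ := by
  refine ⟨hroot, hpre, fun v => ?_⟩
  have hdown : ∀ n i, v ++ [i + n] ∈ τ → v ++ [i] ∈ τ := by
    intro n
    induction n with
    | zero => exact fun i h => h
    | succ n ih => exact fun i h => ih i (hsucc _ _ h)
  have hfin : {j | v ++ [j] ∈ τ}.Finite :=
    τ.finite_toSet.preimage fun i _ j _ hij => by simpa using hij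
  have hex : ∃ d, v ++ [d] ∉ τ := hfin.exists_notMem
  refine ⟨Nat.find hex, fun i => ⟨fun hi => ?_, fun hi => ?_⟩⟩
  · by_contra hle
    exact Nat.find_spec hex (hdown (i - Nat.find hex) _ (by rwa [Nat.add_sub_cancel' (by omega)]))
  · by_contra hi'
    exact Nat.find_min hex hi hi'

/-- The leaf following `v` in a planar tree whose most recent common ancestor with `v` is at
generation `b < v.length`, and which lies at generation `ℓ`. -/
def nextLeaf (v : List ℕ) (b ℓ : ℕ) : List ℕ :=
  v.take b ++ (v.getD b 0 + 1) :: List.replicate (ℓ - b - 1) 0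

theorem nextLeaf_append_cons (p s : List ℕ) (a ℓ : ℕ) :
    nextLeaf (p ++ a :: s) p.length ℓ = p ++ (a + 1) :: List.replicate (ℓ - p.length - 1) 0 := by
  simp [nextLeaf]

namespace IsPlanarTree

variable {τ : Finset (List ℕ)} (hτ : IsPlanarTree τ)
include hτ

theorem append_singleton_mem_of_le {v : List ℕ} {i j : ℕ} (h : v ++ [j] ∈ τ) (hij : i ≤ j) :
    v ++ [i] ∈ τ := by
  obtain ⟨d, hd⟩ := hτ.2.2 v
  exact (hd i).2 (hij.trans_lt ((hd j).1 h))

theorem exists_append_cons_mem_leavesOf {s r : List ℕ} {e e' : ℕ} (hw : s ++ e :: r ∈ τ)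
    (he : e' ≤ e) : ∃ x, s ++ e' :: x ∈ leavesOf τ := by
  have hs : s ++ [e'] ∈ τ := hτ.append_singleton_mem_of_le (hτ.2.1 _ _ (by simp) hw) he
  obtain ⟨y, hy, x, rfl⟩ := exists_mem_leavesOf_prefix hs
  exact ⟨x, by simpa using hy⟩

theorem eq_replicate_of_forall_le {w : List ℕ} (hw : w ∈ leavesOf τ)
    (hmin : ∀ x ∈ leavesOf τ, w ≤ x) : w = List.replicate w.length 0 := by
  refine List.eq_replicate_iff.2 ⟨rfl, fun e he => ?_⟩
  obtain ⟨s, r, rfl⟩ := List.append_of_mem he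
  by_contra hne
  obtain ⟨x, hx⟩ := hτ.exists_append_cons_mem_leavesOf (mem_of_mem_leavesOf hw) (Nat.zero_le e)
  exact (List.append_cons_lt_append_cons s (Nat.pos_of_ne_zero hne) x r).not_ge (hmin _ hx)

theorem eq_nextLeaf_of_consecutive {u w : List ℕ} (hu : u ∈ leavesOf τ) (hw : w ∈ leavesOf τ)
    (huw : u < w) (hgap : ∀ x ∈ leavesOf τ, u < x → w ≤ x) :
    w = nextLeaf u (commonPrefixLen u w) w.length := by
  obtain ⟨p, a, c, s, t, hac, rfl, rfl⟩ := List.Lex.exists_append_cons huw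
    (not_prefix_of_mem_leavesOf hu (mem_of_mem_leavesOf hw) huw.ne)
  have hc : c = a + 1 := by
    by_contra hne
    obtain ⟨x, hx⟩ := hτ.exists_append_cons_mem_leavesOf (mem_of_mem_leavesOf hw)
      (show a + 1 ≤ c by omega)
    exact (List.append_cons_lt_append_cons p (show a + 1 < c by omega) x t).not_ge
      (hgap _ hx (List.append_cons_lt_append_cons p (Nat.lt_succ_self a) s x))
  have ht : t = List.replicate t.length 0 := by
    refine List.eq_replicate_iff.2 ⟨rfl, fun e he => ?_⟩
    obtain ⟨q, r, rfl⟩ := List.append_of_mem he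
    by_contra hne
    obtain ⟨x, hx⟩ := hτ.exists_append_cons_mem_leavesOf (s := p ++ c :: q)
      (by simpa using mem_of_mem_leavesOf hw) (Nat.zero_le e)
    refine (List.append_cons_lt_append_cons (p ++ c :: q) (Nat.pos_of_ne_zero hne) x r).not_ge ?_
    simpa using hgap _ hx (by simpa using List.append_cons_lt_append_cons p hac s (q ++ 0 :: x))
  rw [commonPrefixLen_append_cons p hac.ne, ht, hc]
  simp [nextLeaf]

end IsPlanarTree

section LeafVec

variable {τ : Finset (List ℕ)} {k : ℕ} (h : (leavesOf τ).card = k)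

theorem leafVec_eq_orderEmbOfFin : leafVec τ h = (leavesOf τ).orderEmbOfFin h :=
  funext fun i => Finset.coe_orderIsoOfFin_apply _ h i

theorem leafVec_strictMono : StrictMono (leafVec τ h) := by
  rw [leafVec_eq_orderEmbOfFin]
  exact (Finset.orderEmbOfFin _ h).strictMono

theorem leafVec_mem (i : Fin k) : leafVec τ h i ∈ leavesOf τ := by
  rw [leafVec_eq_orderEmbOfFin]
  exact Finset.orderEmbOfFin_mem _ h i

theorem exists_leafVec_eq {x : List ℕ} (hx : x ∈ leavesOf τ) : ∃ i, leafVec τ h i = x := by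
  rw [leafVec_eq_orderEmbOfFin, ← Set.mem_range, Finset.range_orderEmbOfFin]
  exact hx

theorem commonPrefixLen_leafVec_lt {i j : Fin k} (hij : i < j) :
    commonPrefixLen (leafVec τ h i) (leafVec τ h j) <
      min (leafVec τ h i).length (leafVec τ h j).length :=
  lt_min_iff.2 <| commonPrefixLen_lt_length (leafVec_strictMono h hij) <|
    not_prefix_of_mem_leavesOf (leafVec_mem h i) (mem_of_mem_leavesOf (leafVec_mem h j))
      (leafVec_strictMono h hij).ne

theorem IsPlanarTree.leafVec_zero (hτ : IsPlanarTree τ) (hk : 0 < k) :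
    leafVec τ h ⟨0, hk⟩ = List.replicate (leafVec τ h ⟨0, hk⟩).length 0 := by
  refine hτ.eq_replicate_of_forall_le (leafVec_mem h _) fun x hx => ?_
  obtain ⟨i, rfl⟩ := exists_leafVec_eq h hx
  exact (leafVec_strictMono h).monotone (Fin.le_def.2 (Nat.zero_le _))

theorem IsPlanarTree.leafVec_succ (hτ : IsPlanarTree τ) (i : ℕ) (hi : i + 1 < k) :
    leafVec τ h ⟨i + 1, hi⟩ =
      nextLeaf (leafVec τ h ⟨i, by omega⟩)
        (commonPrefixLen (leafVec τ h ⟨i, by omega⟩) (leafVec τ h ⟨i + 1, hi⟩))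
        (leafVec τ h ⟨i + 1, hi⟩).length := by
  refine hτ.eq_nextLeaf_of_consecutive (leafVec_mem h _) (leafVec_mem h _)
    (leafVec_strictMono h (by simp [Fin.lt_def])) fun x hx hlt => ?_
  obtain ⟨j, rfl⟩ := exists_leafVec_eq h hx
  exact (leafVec_strictMono h).monotone (Fin.le_def.2 ((leafVec_strictMono h).lt_iff_lt.1 hlt))

end LeafVec

theorem IsPlanarTree.eq_of_leafVec_length_eq_of_commonPrefixLen_eq {τ σ : Finset (List ℕ)}
    (hτ : IsPlanarTree τ) (hσ : IsPlanarTree σ) {k : ℕ} (hτk : (leavesOf τ).card = k)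
    (hσk : (leavesOf σ).card = k)
    (hℓ : ∀ i, (leafVec τ hτk i).length = (leafVec σ hσk i).length)
    (hb : ∀ i (hi : i + 1 < k),
      commonPrefixLen (leafVec τ hτk ⟨i, by omega⟩) (leafVec τ hτk ⟨i + 1, hi⟩) =
        commonPrefixLen (leafVec σ hσk ⟨i, by omega⟩) (leafVec σ hσk ⟨i + 1, hi⟩)) :
    τ = σ := by
  have hleaf : ∀ i (hi : i < k), leafVec τ hτk ⟨i, hi⟩ = leafVec σ hσk ⟨i, hi⟩ := by
    intro i
    induction i with
    | zero => intro hi; rw [hτ.leafVec_zero, hσ.leafVec_zero, hℓ]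
    | succ i ih =>
      intro hi
      rw [hτ.leafVec_succ hτk i hi, hσ.leafVec_succ hσk i hi, hb i hi, hℓ, ih]
  have hleaves : leavesOf τ = leavesOf σ := by
    ext x
    constructor
    · intro hx
      obtain ⟨⟨i, hi⟩, rfl⟩ := exists_leafVec_eq hτk hx
      exact hleaf i hi ▸ leafVec_mem hσk _
    · intro hx
      obtain ⟨⟨i, hi⟩, rfl⟩ := exists_leafVec_eq hσk hx
      exact (hleaf i hi).symm ▸ leafVec_mem hτk _
  ext v
  rw [mem_iff_exists_mem_leavesOf_prefix hτ.2.1, mem_iff_exists_mem_leavesOf_prefix hσ.2.1,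
    hleaves]

section NextLeaf

variable {v : List ℕ} {b : ℕ} (hb : b < v.length)
include hb

theorem length_nextLeaf {ℓ : ℕ} (hℓ : b < ℓ) : (nextLeaf v b ℓ).length = ℓ := by
  rw [nextLeaf, List.length_append, List.length_take, List.length_cons, List.length_replicate]
  omega

theorem lt_nextLeaf_and_not_prefix (ℓ : ℕ) : v < nextLeaf v b ℓ ∧ ¬ v <+: nextLeaf v b ℓ := by
  obtain ⟨p, a, s, rfl, rfl⟩ := List.exists_eq_append_cons_of_lt_length hb
  rw [nextLeaf_append_cons]
  exact ⟨List.append_cons_lt_append_cons p a.lt_succ_self _ _,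
    List.not_prefix_append_cons a.succ_ne_self.symm⟩

theorem commonPrefixLen_nextLeaf (ℓ : ℕ) : commonPrefixLen v (nextLeaf v b ℓ) = b := by
  obtain ⟨p, a, s, rfl, rfl⟩ := List.exists_eq_append_cons_of_lt_length hb
  rw [nextLeaf_append_cons, commonPrefixLen_append_cons p a.succ_ne_self.symm]

theorem prefix_of_append_succ_prefix_nextLeaf {x : List ℕ} {j ℓ : ℕ}
    (h : x ++ [j + 1] <+: nextLeaf v b ℓ) : x ++ [j + 1] <+: v ∨ x ++ [j] <+: v := by
  obtain ⟨p, a, s, rfl, rfl⟩ := List.exists_eq_append_cons_of_lt_length hb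
  rw [nextLeaf_append_cons] at h
  rcases List.append_singleton_prefix_append_cons h with h | ⟨rfl, hj⟩ | h
  · exact Or.inl (h.trans (List.prefix_append _ _))
  · exact Or.inr (by simp [show j = a by omega])
  · simp at h

end NextLeaf

def leafSeq (ℓ b : ℕ → ℕ) : ℕ → List ℕ
  | 0 => List.replicate (ℓ 0) 0
  | i + 1 => nextLeaf (leafSeq ℓ b i) (b i) (ℓ (i + 1))

def treeOfLeafSeq (ℓ b : ℕ → ℕ) (k : ℕ) : Finset (List ℕ) :=
  (Finset.range k).biUnion fun i => (leafSeq ℓ b i).inits.toFinset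

section LeafSeq

variable {ℓ b : ℕ → ℕ} {k : ℕ}

theorem mem_treeOfLeafSeq {v : List ℕ} :
    v ∈ treeOfLeafSeq ℓ b k ↔ ∃ i < k, v <+: leafSeq ℓ b i := by
  simp [treeOfLeafSeq]

variable (H : ∀ i, i + 1 < k → b i < ℓ i ∧ b i < ℓ (i + 1))
include H

theorem length_leafSeq : ∀ i < k, (leafSeq ℓ b i).length = ℓ i
  | 0, _ => by simp [leafSeq]
  | i + 1, hi => by
    rw [leafSeq, length_nextLeaf (by rw [length_leafSeq i (by omega)]; exact (H i hi).1) (H i hi).2]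

theorem branch_lt_length_leafSeq {i : ℕ} (hi : i + 1 < k) : b i < (leafSeq ℓ b i).length := by
  rw [length_leafSeq H i (by omega)]
  exact (H i hi).1

theorem leafSeq_lt_and_not_prefix {i j : ℕ} (hij : i < j) (hj : j < k) :
    leafSeq ℓ b i < leafSeq ℓ b j ∧ ¬ leafSeq ℓ b i <+: leafSeq ℓ b j := by
  induction j, hij using Nat.le_induction with
  | base => exact lt_nextLeaf_and_not_prefix (branch_lt_length_leafSeq H hj) _
  | succ j hij ih =>
    obtain ⟨hlt, hnp⟩ := ih (by omega)
    have hstep := (lt_nextLeaf_and_not_prefix (branch_lt_length_leafSeq H hj) (ℓ (j + 1))).1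
    exact ⟨hlt.trans hstep, List.not_prefix_of_lt_of_lt hlt hstep hnp⟩

theorem eq_of_leafSeq_prefix_leafSeq {i j : ℕ} (hi : i < k) (hj : j < k)
    (h : leafSeq ℓ b i <+: leafSeq ℓ b j) : i = j := by
  rcases lt_trichotomy i j with hij | rfl | hji
  · exact absurd h (leafSeq_lt_and_not_prefix H hij hj).2
  · rfl
  · exact absurd (leafSeq_lt_and_not_prefix H hji hi).1 h.le

theorem commonPrefixLen_leafSeq {i : ℕ} (hi : i + 1 < k) :
    commonPrefixLen (leafSeq ℓ b i) (leafSeq ℓ b (i + 1)) = b i :=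
  commonPrefixLen_nextLeaf (branch_lt_length_leafSeq H hi) _

theorem exists_append_prefix_leafSeq_of_succ {x : List ℕ} {j : ℕ} :
    ∀ i < k, x ++ [j + 1] <+: leafSeq ℓ b i → ∃ i' ≤ i, x ++ [j] <+: leafSeq ℓ b i'
  | 0, _, h => by
    simpa [leafSeq] using h.subset (List.mem_append_right x (List.mem_singleton_self _))
  | i + 1, hi, h => by
    rcases prefix_of_append_succ_prefix_nextLeaf (branch_lt_length_leafSeq H hi) h with h | h
    · obtain ⟨i', hi', h'⟩ := exists_append_prefix_leafSeq_of_succ i (by omega) h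
      exact ⟨i', by omega, h'⟩
    · exact ⟨i, by omega, h⟩

theorem isPlanarTree_treeOfLeafSeq (hk : 0 < k) : IsPlanarTree (treeOfLeafSeq ℓ b k) := by
  refine isPlanarTree_of_append_succ_mem (mem_treeOfLeafSeq.2 ⟨0, hk, List.nil_prefix⟩)
    (fun v w hvw hw => ?_) (fun v j hv => ?_)
  · obtain ⟨i, hi, hw⟩ := mem_treeOfLeafSeq.1 hw
    exact mem_treeOfLeafSeq.2 ⟨i, hi, hvw.trans hw⟩
  · obtain ⟨i, hi, hv⟩ := mem_treeOfLeafSeq.1 hv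
    obtain ⟨i', hi', hv'⟩ := exists_append_prefix_leafSeq_of_succ H i hi hv
    exact mem_treeOfLeafSeq.2 ⟨i', by omega, hv'⟩

theorem leafSeq_mem_leavesOf {i : ℕ} (hi : i < k) :
    leafSeq ℓ b i ∈ leavesOf (treeOfLeafSeq ℓ b k) := by
  refine Finset.mem_filter.2 ⟨mem_treeOfLeafSeq.2 ⟨i, hi, List.prefix_rfl⟩, fun w hw hiw => ?_⟩
  obtain ⟨j, hj, hwj⟩ := mem_treeOfLeafSeq.1 hw
  obtain rfl := eq_of_leafSeq_prefix_leafSeq H hi hj (hiw.trans hwj)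
  exact (hiw.eq_of_length_le hwj.length_le).symm

theorem leavesOf_treeOfLeafSeq :
    leavesOf (treeOfLeafSeq ℓ b k) = (Finset.range k).image (leafSeq ℓ b) := by
  ext x
  simp only [Finset.mem_image, Finset.mem_range]
  constructor
  · intro hx
    obtain ⟨i, hi, hxi⟩ := mem_treeOfLeafSeq.1 (mem_of_mem_leavesOf hx)
    exact ⟨i, hi, ((Finset.mem_filter.1 hx).2 _
      (mem_of_mem_leavesOf (leafSeq_mem_leavesOf H hi)) hxi)⟩
  · rintro ⟨i, hi, rfl⟩
    exact leafSeq_mem_leavesOf H hi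

theorem card_leavesOf_treeOfLeafSeq : (leavesOf (treeOfLeafSeq ℓ b k)).card = k := by
  rw [leavesOf_treeOfLeafSeq H, Finset.card_image_of_injOn, Finset.card_range]
  intro i hi j hj hij
  exact eq_of_leafSeq_prefix_leafSeq H (Finset.mem_range.1 hi) (Finset.mem_range.1 hj)
    (hij ▸ List.prefix_rfl)

theorem leafVec_treeOfLeafSeq (h : (leavesOf (treeOfLeafSeq ℓ b k)).card = k) (i : Fin k) :
    leafVec (treeOfLeafSeq ℓ b k) h i = leafSeq ℓ b i := by
  rw [leafVec_eq_orderEmbOfFin, ← Finset.orderEmbOfFin_unique h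
    (f := fun i : Fin k => leafSeq ℓ b i) (fun i => leafSeq_mem_leavesOf H i.2)
    fun i j hij => (leafSeq_lt_and_not_prefix H hij j.2).1]

end LeafSeq

theorem exists_isPlanarTree_leafVec {k : ℕ} (hk : 0 < k) (ℓ : Fin k → ℕ) (b : Fin (k - 1) → ℕ)
    (hb : ∀ i : Fin (k - 1), b i < min (ℓ ⟨i.1, by omega⟩) (ℓ ⟨i.1 + 1, by omega⟩)) :
    ∃ τ, ∃ (_ : IsPlanarTree τ) (h : (leavesOf τ).card = k),
      (∀ i, (leafVec τ h i).length = ℓ i) ∧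
      ∀ i : Fin (k - 1),
        commonPrefixLen (leafVec τ h ⟨i.1, by omega⟩) (leafVec τ h ⟨i.1 + 1, by omega⟩) = b i := by
  set ℓ' := Function.extend Fin.val ℓ 0
  set b' := Function.extend Fin.val b 0
  have hℓ' (i : Fin k) : ℓ' i = ℓ i := Fin.val_injective.extend_apply ℓ 0 i
  have hb' (i : Fin (k - 1)) : b' i = b i := Fin.val_injective.extend_apply b 0 i
  have H : ∀ i, i + 1 < k → b' i < ℓ' i ∧ b' i < ℓ' (i + 1) := fun i hi => by
    simpa [hℓ' ⟨i, by omega⟩, hℓ' ⟨i + 1, hi⟩, hb' ⟨i, by omega⟩] using hb ⟨i, by omega⟩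
  refine ⟨treeOfLeafSeq ℓ' b' k, isPlanarTree_treeOfLeafSeq H hk, card_leavesOf_treeOfLeafSeq H,
    fun i => ?_, fun i => ?_⟩
  · rw [leafVec_treeOfLeafSeq H, length_leafSeq H i i.2, hℓ']
  · rw [leafVec_treeOfLeafSeq H, leafVec_treeOfLeafSeq H,
      commonPrefixLen_leafSeq H (show i.1 + 1 < k by omega), hb']

/-- **Point process encoding of planar trees.** The map sending a planar tree with
`k` leaves `v₁ < … < v_k` to the vectors `ℓᵢ = |vᵢ|` of leaf generations and
`bᵢ = |vᵢ ∧ vᵢ₊₁|` of generations of MRCAs of consecutive leaves is a bijection onto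
`{(ℓ, b) ∈ ℕᵏ × ℕ^{k-1} : bᵢ < min (ℓᵢ, ℓᵢ₊₁)}`. -/
theorem planar_tree_point_process_bijection (k : ℕ) (hk : 1 ≤ k) :
    ∃ e : {τ : Finset (List ℕ) // IsPlanarTree τ ∧ (leavesOf τ).card = k} ≃
        {p : (Fin k → ℕ) × (Fin (k - 1) → ℕ) //
          ∀ i : Fin (k - 1),
            p.2 i < min (p.1 ⟨i.1, lt_of_lt_of_le i.2 (Nat.sub_le k 1)⟩)
              (p.1 ⟨i.1 + 1, by have := i.2; omega⟩)},
      ∀ τ : {τ : Finset (List ℕ) // IsPlanarTree τ ∧ (leavesOf τ).card = k},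
        (∀ i : Fin k, (e τ).1.1 i = (leafVec τ.1 τ.2.2 i).length) ∧
        (∀ i : Fin (k - 1),
          (e τ).1.2 i =
            commonPrefixLen
              (leafVec τ.1 τ.2.2 ⟨i.1, lt_of_lt_of_le i.2 (Nat.sub_le k 1)⟩)
              (leafVec τ.1 τ.2.2 ⟨i.1 + 1, by have := i.2; omega⟩)) := by
  refine ⟨Equiv.ofBijective (fun τ => ⟨(fun i => (leafVec τ.1 τ.2.2 i).length,
      fun i => commonPrefixLen (leafVec τ.1 τ.2.2 ⟨i.1, by omega⟩)
        (leafVec τ.1 τ.2.2 ⟨i.1 + 1, by omega⟩)),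
      fun i => commonPrefixLen_leafVec_lt τ.2.2 (Fin.mk_lt_mk.2 i.1.lt_succ_self)⟩) ⟨?_, ?_⟩,
    fun τ => ⟨fun _ => rfl, fun _ => rfl⟩⟩
  · rintro ⟨τ, hτ, hτk⟩ ⟨σ, hσ, hσk⟩ h
    simp only [Subtype.mk.injEq, Prod.mk.injEq, funext_iff] at h
    exact Subtype.ext (hτ.eq_of_leafVec_length_eq_of_commonPrefixLen_eq hσ hτk hσk h.1
      fun i hi => h.2 ⟨i, by omega⟩)
  · rintro ⟨⟨ℓ, b⟩, hb⟩
    obtain ⟨τ, hτ, hτk, hℓ, hb'⟩ := exists_isPlanarTree_leafVec hk ℓ b hb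
    exact ⟨⟨τ, hτ, hτk⟩, Subtype.ext (Prod.ext (funext hℓ) (funext hb'))⟩

end
end

section
/- On the space of planar trees with k leaves at a common height ℓ ≥ 1 (ultrametric planar trees of height ℓ), the map τ ↦ (b_1(τ), ..., b_{k-1}(τ)) sending a tree to the generations of the most recent common ancestors of consecutive leaves is a bijection onto {0, 1, ..., ℓ−1}^{k-1}. -/
open scoped Classical

noncomputable section

/-!
Let `v < w` be consecutive leaves, in lexicographic order, of an ultrametric planar tree of
height `ℓ`, and `m = commonPrefixLen v w`. Since children are numbered consecutively, the node
obtained from the path to `v` by stepping at generation `m` to the next sibling is in the tree, and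
so is the leftmost path below it; this gives a leaf `nextLeaf ℓ v m` with `v < nextLeaf ℓ v m ≤ w`,
hence equal to `w`. The first leaf is `0^ℓ`, so the generations `b_i < ℓ` determine all leaves,
and a tree is the prefix closure of its leaves. Conversely, for any `b ∈ {0,…,ℓ-1}^{k-1}` this
recursion produces `k` increasing words of length `ℓ` whose consecutive common prefixes have
lengths `b_i`, and their prefix closure is planar: a node `v ++ [c+1]` on the path to some leaf
forces `v ++ [c]` onto the path to an earlier one.
-/

namespace UltrametricTree

theorem commonPrefixLen_append_cons (u : List ℕ) {a c : ℕ} (h : a ≠ c) (v w : List ℕ) :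
    commonPrefixLen (u ++ a :: v) (u ++ c :: w) = u.length := by
  induction u with
  | nil => simp [commonPrefixLen, h]
  | cons x u ih => simp [commonPrefixLen, ih]

theorem take_append_getD_cons_drop {v : List ℕ} {m : ℕ} (hm : m < v.length) :
    v.take m ++ v.getD m 0 :: v.drop (m + 1) = v := by
  rw [List.getD_eq_getElem _ _ hm, List.getElem_cons_drop, List.take_append_drop]

theorem exists_eq_append_cons_of_lt {α : Type*} [LT α] {v w : List α}
    (hlen : v.length = w.length) (h : v < w) :
    ∃ u a c v' w', v = u ++ a :: v' ∧ w = u ++ c :: w' ∧ a < c := by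
  induction h with
  | nil => simp at hlen
  | @cons x v w _ ih =>
    obtain ⟨u, a, c, v', w', rfl, rfl, hac⟩ := ih (by simpa using hlen)
    exact ⟨x :: u, a, c, v', w', rfl, rfl, hac⟩
  | @rel a v c w hac => exact ⟨[], a, c, v, w, rfl, rfl, hac⟩

theorem replicate_bot_le {α : Type*} [LinearOrder α] [OrderBot α] (w : List α) :
    List.replicate w.length ⊥ ≤ w := by
  induction w with
  | nil => exact le_rfl
  | cons a w ih =>
    rcases eq_bot_or_bot_lt a with rfl | h
    · exact List.cons_le_cons ⊥ ih
    · exact le_of_lt (List.Lex.rel h)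

theorem append_le_append_left {α : Type*} [LinearOrder α] (u : List α) {x y : List α}
    (h : x ≤ y) : u ++ x ≤ u ++ y := by
  rcases h.lt_or_eq with h | rfl
  · exact (List.append_left_lt h).le
  · exact le_rfl

theorem eq_zero_of_append_singleton_prefix {u v : List ℕ} {x r : ℕ}
    (h : v ++ [x] <+: u ++ List.replicate r 0) (hle : u.length ≤ v.length) : x = 0 := by
  simpa [List.getElem_append_right hle] using h.getElem (i := v.length) (by simp)

theorem append_getD_prefix {v w : List ℕ} (h : v <+: w) (hlt : v.length < w.length) :
    v ++ [w.getD v.length 0] <+: w := by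
  refine ⟨w.drop (v.length + 1), ?_⟩
  nth_rewrite 1 [List.prefix_iff_eq_take.1 h]
  simpa using take_append_getD_cons_drop hlt

theorem append_cons_replicate_le (u : List ℕ) {a c : ℕ} (hac : a < c) {w : List ℕ} :
    u ++ (a + 1) :: List.replicate w.length 0 ≤ u ++ c :: w := by
  refine append_le_append_left _ ?_
  rcases (Nat.succ_le_of_lt hac).lt_or_eq with h | rfl
  · exact le_of_lt (List.Lex.rel h)
  · exact List.cons_le_cons _ (by simpa using replicate_bot_le w)

/-! ### The leaf sequence of a coalescent point process -/

/-- The leftmost word of length `ℓ` that branches off `v` to the right at generation `m`. -/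
def nextLeaf (ℓ : ℕ) (v : List ℕ) (m : ℕ) : List ℕ :=
  v.take m ++ (v.getD m 0 + 1) :: List.replicate (ℓ - m - 1) 0

theorem nextLeaf_append_cons (ℓ : ℕ) (u v : List ℕ) (a : ℕ) :
    nextLeaf ℓ (u ++ a :: v) u.length = u ++ (a + 1) :: List.replicate (ℓ - u.length - 1) 0 := by
  simp [nextLeaf]

section nextLeaf

variable {ℓ m : ℕ} {v : List ℕ}

theorem length_nextLeaf (hv : v.length = ℓ) (hm : m < ℓ) : (nextLeaf ℓ v m).length = ℓ := by
  simp only [nextLeaf, List.length_append, List.length_take, List.length_cons,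
    List.length_replicate, hv]
  omega

theorem lt_nextLeaf (hv : v.length = ℓ) (hm : m < ℓ) : v < nextLeaf ℓ v m := by
  conv_lhs => rw [← take_append_getD_cons_drop (hv ▸ hm : m < v.length)]
  exact List.append_left_lt (List.cons_lt_cons_iff.mpr (Or.inl (Nat.lt_succ_self _)))

theorem commonPrefixLen_nextLeaf (hv : v.length = ℓ) (hm : m < ℓ) :
    commonPrefixLen v (nextLeaf ℓ v m) = m := by
  have hmv : m < v.length := hv ▸ hm
  have h := commonPrefixLen_append_cons (v.take m) (Nat.succ_ne_self (v.getD m 0)).symm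
    (v.drop (m + 1)) (List.replicate (ℓ - m - 1) 0)
  rwa [take_append_getD_cons_drop hmv, List.length_take_of_le hmv.le] at h

end nextLeaf

/-- The leaves, in lexicographic order, of the ultrametric tree of height `ℓ` whose `i`-th and
`(i+1)`-th leaves coalesce at generation `b i`. -/
def leafSeq (ℓ : ℕ) (b : ℕ → ℕ) : ℕ → List ℕ
  | 0 => List.replicate ℓ 0
  | i + 1 => nextLeaf ℓ (leafSeq ℓ b i) (b i)

section leafSeq

variable {ℓ k : ℕ} {b : ℕ → ℕ} (hb : ∀ i, i + 1 < k → b i < ℓ)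
include hb

theorem length_leafSeq {i : ℕ} (hi : i < k) : (leafSeq ℓ b i).length = ℓ := by
  induction i with
  | zero => simp [leafSeq]
  | succ i ih => exact length_nextLeaf (ih (by omega)) (hb i hi)

theorem strictMonoOn_leafSeq : StrictMonoOn (leafSeq ℓ b) (Set.Iio k) := by
  refine (strictMonoOn_Iic_of_lt_succ (n := k - 1) fun i hi => ?_).mono
    fun i (hi : i < k) => Set.mem_Iic.2 (by omega)
  exact lt_nextLeaf (length_leafSeq hb (by omega)) (hb i (by omega))

theorem commonPrefixLen_leafSeq {i : ℕ} (hi : i + 1 < k) :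
    commonPrefixLen (leafSeq ℓ b i) (leafSeq ℓ b (i + 1)) = b i :=
  commonPrefixLen_nextLeaf (length_leafSeq hb (by omega)) (hb i hi)

theorem exists_prefix_leafSeq_of_succ_prefix {c : ℕ} {v : List ℕ} {j : ℕ} (hj : j < k)
    (h : v ++ [c + 1] <+: leafSeq ℓ b j) : ∃ j' ≤ j, v ++ [c] <+: leafSeq ℓ b j' := by
  induction j with
  | zero =>
    exact absurd (eq_zero_of_append_singleton_prefix (u := []) h (by simp)) c.succ_ne_zero
  | succ j ih =>
    set w := leafSeq ℓ b j
    have hmw : b j < w.length := (length_leafSeq hb (by omega : j < k)).symm ▸ hb j hj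
    have hlen : (w.take (b j)).length = b j := List.length_take_of_le hmw.le
    change v ++ [c + 1] <+: w.take (b j) ++ (w.getD (b j) 0 + 1) :: _ at h
    -- the last letter of `v ++ [c + 1]` lies before, at, or after the branch point
    rcases lt_trichotomy v.length (b j) with hlt | heq | hgt
    · have h' : v ++ [c + 1] <+: w :=
        (List.prefix_of_prefix_length_le h (List.prefix_append _ _)
          (by simp only [List.length_append, List.length_singleton, List.length_take]; omega)).trans
          (List.take_prefix _ _)
      obtain ⟨j', hj', h''⟩ := ih (by omega) h'
      exact ⟨j', by omega, h''⟩
    · obtain ⟨rfl, hc⟩ := (List.prefix_append_inj_of_length_eq (by omega)).1 h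
      obtain rfl : c = w.getD (b j) 0 := by simpa using hc
      have h' := append_getD_prefix (List.take_prefix (b j) w) (by omega)
      rw [hlen] at h'
      exact ⟨j, j.le_succ, h'⟩
    · have := eq_zero_of_append_singleton_prefix
        (u := w.take (b j) ++ [w.getD (b j) 0 + 1]) (by simpa using h) (by simp; omega)
      exact absurd this c.succ_ne_zero

end leafSeq

/-! ### Trees spanned by their leaves -/

def prefixClosure (L : Finset (List ℕ)) : Finset (List ℕ) :=
  L.biUnion fun v => v.inits.toFinset

theorem mem_prefixClosure {L : Finset (List ℕ)} {u : List ℕ} :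
    u ∈ prefixClosure L ↔ ∃ v ∈ L, u <+: v := by
  simp [prefixClosure, List.mem_inits]

theorem exists_mem_leavesOf_prefix {s : Finset (List ℕ)} {v : List ℕ} (hv : v ∈ s) :
    ∃ w ∈ leavesOf s, v <+: w := by
  obtain ⟨w, hw, hmax⟩ := (s.filter (v <+: ·)).exists_max_image List.length ⟨v, by simp [hv]⟩
  rw [Finset.mem_filter] at hw
  refine ⟨w, Finset.mem_filter.2 ⟨hw.1, fun u hu hwu => ?_⟩, hw.2⟩
  have hul : u.length ≤ w.length := hmax u (Finset.mem_filter.2 ⟨hu, hw.2.trans hwu⟩)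
  exact (hwu.eq_of_length (le_antisymm hwu.length_le hul)).symm

theorem prefixClosure_leavesOf {τ : Finset (List ℕ)}
    (hcl : ∀ v w : List ℕ, v <+: w → w ∈ τ → v ∈ τ) : prefixClosure (leavesOf τ) = τ := by
  ext u
  rw [mem_prefixClosure]
  refine ⟨fun ⟨v, hv, huv⟩ => hcl u v huv (Finset.mem_filter.1 hv).1,
    exists_mem_leavesOf_prefix⟩

theorem leavesOf_prefixClosure {ℓ : ℕ} {L : Finset (List ℕ)} (hL : ∀ v ∈ L, v.length = ℓ) :
    leavesOf (prefixClosure L) = L := by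
  ext u
  simp only [leavesOf, Finset.mem_filter, mem_prefixClosure]
  constructor
  · rintro ⟨⟨v, hv, huv⟩, hmax⟩
    exact hmax v ⟨v, hv, List.prefix_refl v⟩ huv ▸ hv
  · refine fun hu => ⟨⟨u, hu, List.prefix_refl u⟩, ?_⟩
    rintro w ⟨x, hx, hwx⟩ huw
    have hux : u = x := (huw.trans hwx).eq_of_length (by rw [hL u hu, hL x hx])
    subst hux
    exact (huw.eq_of_length (le_antisymm huw.length_le hwx.length_le)).symm

theorem exists_forall_iff_lt_of_finite {P : ℕ → Prop} (hfin : {i | P i}.Finite)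
    (hP : ∀ i, P (i + 1) → P i) : ∃ d, ∀ i, P i ↔ i < d := by
  classical
  have hex : ∃ d, ¬ P d := hfin.exists_notMem
  have hanti : Antitone P := antitone_nat_of_succ_le hP
  refine ⟨Nat.find hex, fun i => ⟨fun hi => ?_, fun hi => not_not.1 (Nat.find_min hex hi)⟩⟩
  by_contra h
  exact Nat.find_spec hex (hanti (not_lt.1 h) hi)

theorem isPlanarTree_prefixClosure {L : Finset (List ℕ)} (hL : L.Nonempty)
    (hsucc : ∀ v c, v ++ [c + 1] ∈ prefixClosure L → v ++ [c] ∈ prefixClosure L) :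
    IsPlanarTree (prefixClosure L) := by
  refine ⟨?_, ?_, fun v => exists_forall_iff_lt_of_finite ?_ (hsucc v)⟩
  · obtain ⟨w, hw⟩ := hL
    exact mem_prefixClosure.2 ⟨w, hw, List.nil_prefix⟩
  · intro u v huv hv
    obtain ⟨w, hw, hvw⟩ := mem_prefixClosure.1 hv
    exact mem_prefixClosure.2 ⟨w, hw, huv.trans hvw⟩
  · exact (prefixClosure L).finite_toSet.preimage fun a _ b _ hab => by simpa using hab

def treeOfCoalescence (ℓ k : ℕ) (b : ℕ → ℕ) : Finset (List ℕ) :=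
  prefixClosure ((Finset.range k).image (leafSeq ℓ b))

section treeOfCoalescence

variable {ℓ k : ℕ} {b : ℕ → ℕ} (hb : ∀ i, i + 1 < k → b i < ℓ)
include hb

theorem leavesOf_treeOfCoalescence :
    leavesOf (treeOfCoalescence ℓ k b) = (Finset.range k).image (leafSeq ℓ b) := by
  refine leavesOf_prefixClosure (ℓ := ℓ) fun v hv => ?_
  obtain ⟨i, hi, rfl⟩ := Finset.mem_image.1 hv
  exact length_leafSeq hb (Finset.mem_range.1 hi)

theorem isPlanarTree_treeOfCoalescence (hk : 1 ≤ k) : IsPlanarTree (treeOfCoalescence ℓ k b) := by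
  refine isPlanarTree_prefixClosure
    (Finset.image_nonempty.2 (Finset.nonempty_range_iff.2 (by omega))) fun v c hc => ?_
  obtain ⟨w, hw, hcw⟩ := mem_prefixClosure.1 hc
  obtain ⟨j, hj, rfl⟩ := Finset.mem_image.1 hw
  obtain ⟨j', hj', h⟩ := exists_prefix_leafSeq_of_succ_prefix hb (Finset.mem_range.1 hj) hcw
  have hj'k : j' ∈ Finset.range k := Finset.mem_range.2 (hj'.trans_lt (Finset.mem_range.1 hj))
  exact mem_prefixClosure.2 ⟨_, Finset.mem_image_of_mem _ hj'k, h⟩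

theorem card_leavesOf_treeOfCoalescence : (leavesOf (treeOfCoalescence ℓ k b)).card = k := by
  rw [leavesOf_treeOfCoalescence hb, Finset.card_image_of_injOn, Finset.card_range]
  exact (strictMonoOn_leafSeq hb).injOn.mono fun i hi => by simpa using hi

theorem length_of_mem_leavesOf_treeOfCoalescence :
    ∀ v ∈ leavesOf (treeOfCoalescence ℓ k b), v.length = ℓ := by
  rw [leavesOf_treeOfCoalescence hb]
  rintro v hv
  obtain ⟨i, hi, rfl⟩ := Finset.mem_image.1 hv
  exact length_leafSeq hb (Finset.mem_range.1 hi)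

theorem leafVec_treeOfCoalescence (h : (leavesOf (treeOfCoalescence ℓ k b)).card = k)
    (i : Fin k) : leafVec (treeOfCoalescence ℓ k b) h i = leafSeq ℓ b i := by
  have hmem (i : Fin k) : leafSeq ℓ b i ∈ leavesOf (treeOfCoalescence ℓ k b) := by
    rw [leavesOf_treeOfCoalescence hb]
    exact Finset.mem_image_of_mem _ (Finset.mem_range.2 i.2)
  have hmono : StrictMono fun i : Fin k => leafSeq ℓ b i :=
    fun i j hij => strictMonoOn_leafSeq hb i.2 j.2 hij
  rw [leafVec, Finset.coe_orderIsoOfFin_apply, ← Finset.orderEmbOfFin_unique h hmem hmono]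

end treeOfCoalescence

/-! ### Ultrametric planar trees -/

theorem commonPrefixLen_lt_of_lt {v w : List ℕ} (hlen : v.length = w.length) (h : v < w) :
    commonPrefixLen v w < v.length := by
  obtain ⟨u, a, c, v', w', rfl, rfl, hac⟩ := exists_eq_append_cons_of_lt hlen h
  rw [commonPrefixLen_append_cons u hac.ne]
  simp

theorem nextLeaf_commonPrefixLen_le {ℓ : ℕ} {v w : List ℕ} (hv : v.length = ℓ)
    (hw : w.length = ℓ) (h : v < w) : nextLeaf ℓ v (commonPrefixLen v w) ≤ w := by
  obtain ⟨u, a, c, v', w', rfl, rfl, hac⟩ := exists_eq_append_cons_of_lt (hv.trans hw.symm) h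
  rw [commonPrefixLen_append_cons u hac.ne, nextLeaf_append_cons]
  convert append_cons_replicate_le u hac (w := w') using 4
  simp only [List.length_append, List.length_cons] at hw
  omega

section ultrametric

variable {ℓ : ℕ} {τ : Finset (List ℕ)} (hlen : ∀ v ∈ leavesOf τ, v.length = ℓ)
include hlen

theorem length_le_of_mem {v : List ℕ} (hv : v ∈ τ) : v.length ≤ ℓ := by
  obtain ⟨w, hw, hvw⟩ := exists_mem_leavesOf_prefix hv
  exact hlen w hw ▸ hvw.length_le

theorem mem_leavesOf_of_length_eq {v : List ℕ} (hv : v ∈ τ) (hvl : v.length = ℓ) :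
    v ∈ leavesOf τ :=
  Finset.mem_filter.2 ⟨hv, fun _ hw hvw =>
    (hvw.eq_of_length (le_antisymm hvw.length_le (hvl ▸ length_le_of_mem hlen hw))).symm⟩

variable (hτ : IsPlanarTree τ)
include hτ

theorem append_zero_mem {v : List ℕ} (hv : v ∈ τ) (hvl : v.length < ℓ) : v ++ [0] ∈ τ := by
  obtain ⟨w, hw, hvw⟩ := exists_mem_leavesOf_prefix hv
  have hchild : v ++ [w.getD v.length 0] ∈ τ :=
    hτ.2.1 _ w (append_getD_prefix hvw (hlen w hw ▸ hvl)) (Finset.mem_filter.1 hw).1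
  obtain ⟨d, hd⟩ := hτ.2.2 v
  exact (hd 0).2 (Nat.zero_lt_of_lt ((hd _).1 hchild))

theorem append_replicate_mem {v : List ℕ} (hv : v ∈ τ) :
    v ++ List.replicate (ℓ - v.length) 0 ∈ τ := by
  induction h : ℓ - v.length generalizing v with
  | zero => simpa using hv
  | succ t ih =>
    have h0 := ih (append_zero_mem hlen hτ hv (by omega))
      (by simp only [List.length_append, List.length_singleton]; omega)
    simpa [List.replicate_succ] using h0

theorem replicate_mem_leavesOf : List.replicate ℓ 0 ∈ leavesOf τ :=
  mem_leavesOf_of_length_eq hlen (by simpa using append_replicate_mem hlen hτ hτ.1) (by simp)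

theorem nextLeaf_mem_leavesOf {v w : List ℕ} (hv : v ∈ leavesOf τ) (hw : w ∈ leavesOf τ)
    (h : v < w) : nextLeaf ℓ v (commonPrefixLen v w) ∈ leavesOf τ := by
  have hwl := hlen w hw
  obtain ⟨u, a, c, v', w', rfl, rfl, hac⟩ :=
    exists_eq_append_cons_of_lt (by rw [hlen _ hv, hwl]) h
  rw [commonPrefixLen_append_cons u hac.ne, nextLeaf_append_cons]
  have huc : u ++ [c] ∈ τ := hτ.2.1 _ _ ⟨w', by simp⟩ (Finset.mem_filter.1 hw).1
  -- the right sibling of the branch point on the path to `v`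
  obtain ⟨d, hd⟩ := hτ.2.2 u
  have hua : u ++ [a + 1] ∈ τ := (hd _).2 (lt_of_le_of_lt hac ((hd c).1 huc))
  simp only [List.length_append, List.length_cons] at hwl
  refine mem_leavesOf_of_length_eq hlen ?_
    (by simp only [List.length_append, List.length_cons, List.length_replicate]; omega)
  convert append_replicate_mem hlen hτ hua using 1
  simp [Nat.sub_sub]

end ultrametric

section leafVec

variable {τ : Finset (List ℕ)} {k : ℕ} (h : (leavesOf τ).card = k)
include h

theorem leafVec_mem (i : Fin k) : leafVec τ h i ∈ leavesOf τ :=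
  ((leavesOf τ).orderIsoOfFin h i).2

theorem leafVec_strictMono : StrictMono (leafVec τ h) :=
  fun _ _ hij => ((leavesOf τ).orderIsoOfFin h).strictMono hij

theorem exists_leafVec_eq {w : List ℕ} (hw : w ∈ leavesOf τ) : ∃ i, leafVec τ h i = w :=
  ⟨((leavesOf τ).orderIsoOfFin h).symm ⟨w, hw⟩, by simp [leafVec]⟩

theorem leafVec_lt_succ {i : ℕ} (hi : i + 1 < k) :
    leafVec τ h ⟨i, by omega⟩ < leafVec τ h ⟨i + 1, hi⟩ :=
  leafVec_strictMono h (Fin.mk_lt_mk.2 i.lt_succ_self)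

theorem leafVec_zero_le (hk : 0 < k) {w : List ℕ} (hw : w ∈ leavesOf τ) :
    leafVec τ h ⟨0, hk⟩ ≤ w := by
  obtain ⟨i, rfl⟩ := exists_leafVec_eq h hw
  exact (leafVec_strictMono h).monotone (Fin.le_def.2 i.1.zero_le)

theorem leafVec_succ_le {i : ℕ} (hi : i + 1 < k) {w : List ℕ} (hw : w ∈ leavesOf τ)
    (hlt : leafVec τ h ⟨i, by omega⟩ < w) : leafVec τ h ⟨i + 1, hi⟩ ≤ w := by
  obtain ⟨j, rfl⟩ := exists_leafVec_eq h hw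
  exact (leafVec_strictMono h).monotone (Fin.le_def.2 ((leafVec_strictMono h).lt_iff_lt.1 hlt))

variable {ℓ : ℕ} (hlen : ∀ v ∈ leavesOf τ, v.length = ℓ)
include hlen

theorem commonPrefixLen_leafVec_lt {i : ℕ} (hi : i + 1 < k) :
    commonPrefixLen (leafVec τ h ⟨i, by omega⟩) (leafVec τ h ⟨i + 1, hi⟩) < ℓ := by
  have hlt := leafVec_lt_succ h hi
  have hl := hlen _ (leafVec_mem h ⟨i, by omega⟩)
  exact hl ▸ commonPrefixLen_lt_of_lt (by rw [hl, hlen _ (leafVec_mem h _)]) hlt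

variable (hτ : IsPlanarTree τ)
include hτ

theorem leafVec_zero (hk : 0 < k) : leafVec τ h ⟨0, hk⟩ = List.replicate ℓ 0 := by
  refine le_antisymm (leafVec_zero_le h hk (replicate_mem_leavesOf hlen hτ)) ?_
  simpa [hlen _ (leafVec_mem h _)] using replicate_bot_le (leafVec τ h ⟨0, hk⟩)

theorem leafVec_succ {i : ℕ} (hi : i + 1 < k) :
    leafVec τ h ⟨i + 1, hi⟩ = nextLeaf ℓ (leafVec τ h ⟨i, by omega⟩)
      (commonPrefixLen (leafVec τ h ⟨i, by omega⟩) (leafVec τ h ⟨i + 1, hi⟩)) := by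
  have hlt := leafVec_lt_succ h hi
  have hv := hlen _ (leafVec_mem h ⟨i, by omega⟩)
  refine le_antisymm (leafVec_succ_le h hi ?_ ?_) ?_
  · exact nextLeaf_mem_leavesOf hlen hτ (leafVec_mem h _) (leafVec_mem h _) hlt
  · exact lt_nextLeaf hv (commonPrefixLen_leafVec_lt h hlen hi)
  · exact nextLeaf_commonPrefixLen_le hv (hlen _ (leafVec_mem h _)) hlt

variable {b : ℕ → ℕ} (hb : ∀ i (hi : i + 1 < k),
  b i = commonPrefixLen (leafVec τ h ⟨i, by omega⟩) (leafVec τ h ⟨i + 1, hi⟩))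
include hb

theorem leafVec_eq_leafSeq : ∀ (i : ℕ) (hi : i < k), leafVec τ h ⟨i, hi⟩ = leafSeq ℓ b i
  | 0, hk => leafVec_zero h hlen hτ hk
  | i + 1, hi => by
    rw [leafVec_succ h hlen hτ hi, ← hb i hi, leafVec_eq_leafSeq i (by omega)]
    rfl

theorem leavesOf_eq_image_leafSeq : leavesOf τ = (Finset.range k).image (leafSeq ℓ b) := by
  ext w
  constructor
  · intro hw
    obtain ⟨i, rfl⟩ := exists_leafVec_eq h hw
    exact Finset.mem_image.2
      ⟨i, Finset.mem_range.2 i.2, (leafVec_eq_leafSeq h hlen hτ hb i i.2).symm⟩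
  · intro hw
    obtain ⟨i, hi, rfl⟩ := Finset.mem_image.1 hw
    rw [← leafVec_eq_leafSeq h hlen hτ hb i (Finset.mem_range.1 hi)]
    exact leafVec_mem h _

theorem eq_treeOfCoalescence : τ = treeOfCoalescence ℓ k b :=
  calc τ = prefixClosure (leavesOf τ) := (prefixClosure_leavesOf hτ.2.1).symm
    _ = treeOfCoalescence ℓ k b := congrArg prefixClosure (leavesOf_eq_image_leafSeq h hlen hτ hb)

end leafVec

abbrev UltrametricPlanarTree (k ℓ : ℕ) : Type :=
  {τ : Finset (List ℕ) //
    IsPlanarTree τ ∧ (leavesOf τ).card = k ∧ ∀ v ∈ leavesOf τ, v.length = ℓ}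

variable {k ℓ : ℕ}

def coalescenceGenerations (τ : UltrametricPlanarTree k ℓ) (i : Fin (k - 1)) : Fin ℓ :=
  ⟨commonPrefixLen (leafVec τ.1 τ.2.2.1 ⟨i, by omega⟩) (leafVec τ.1 τ.2.2.1 ⟨i + 1, by omega⟩),
    commonPrefixLen_leafVec_lt τ.2.2.1 τ.2.2.2 (by omega)⟩

def extendGenerations (b : Fin (k - 1) → Fin ℓ) (i : ℕ) : ℕ :=
  if h : i < k - 1 then b ⟨i, h⟩ else 0

theorem extendGenerations_lt (b : Fin (k - 1) → Fin ℓ) {i : ℕ} (hi : i + 1 < k) :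
    extendGenerations b i < ℓ := by
  rw [extendGenerations, dif_pos (by omega)]
  exact (b _).2

def ofCoalescenceGenerations (hk : 1 ≤ k) (b : Fin (k - 1) → Fin ℓ) :
    UltrametricPlanarTree k ℓ :=
  ⟨treeOfCoalescence ℓ k (extendGenerations b),
    isPlanarTree_treeOfCoalescence (fun _ => extendGenerations_lt b) hk,
    card_leavesOf_treeOfCoalescence fun _ => extendGenerations_lt b,
    length_of_mem_leavesOf_treeOfCoalescence fun _ => extendGenerations_lt b⟩

def coalescenceEquiv (hk : 1 ≤ k) : UltrametricPlanarTree k ℓ ≃ (Fin (k - 1) → Fin ℓ) where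
  toFun := coalescenceGenerations
  invFun := ofCoalescenceGenerations hk
  left_inv τ := Subtype.ext <| Eq.symm <| eq_treeOfCoalescence τ.2.2.1 τ.2.2.2 τ.2.1
    fun i hi => by simp [extendGenerations, coalescenceGenerations, show i < k - 1 by omega]
  right_inv b := funext fun i => Fin.ext <| by
    have hb := fun j => extendGenerations_lt (k := k) b (i := j)
    simp only [coalescenceGenerations, ofCoalescenceGenerations, leafVec_treeOfCoalescence hb]
    rw [commonPrefixLen_leafSeq hb (by omega), extendGenerations, dif_pos i.2]

end UltrametricTree

/-- **Coalescent point process encoding of ultrametric trees.** On planar trees with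
`k` leaves all at height `ℓ ≥ 1`, the map `τ ↦ (b₁(τ), …, b_{k-1}(τ))` recording the
generations of the MRCAs of consecutive leaves is a bijection onto `{0, …, ℓ-1}^{k-1}`. -/
theorem ultrametric_tree_bijection (k ℓ : ℕ) (hk : 1 ≤ k) :
    ∃ e : {τ : Finset (List ℕ) //
          IsPlanarTree τ ∧ (leavesOf τ).card = k ∧ ∀ v ∈ leavesOf τ, v.length = ℓ} ≃
        (Fin (k - 1) → Fin ℓ),
      ∀ τ : {τ : Finset (List ℕ) //
          IsPlanarTree τ ∧ (leavesOf τ).card = k ∧ ∀ v ∈ leavesOf τ, v.length = ℓ},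
        ∀ i : Fin (k - 1),
          (e τ i : ℕ) =
            commonPrefixLen
              (leafVec τ.1 τ.2.2.1 ⟨i.1, lt_of_lt_of_le i.2 (Nat.sub_le k 1)⟩)
              (leafVec τ.1 τ.2.2.1 ⟨i.1 + 1, by have := i.2; omega⟩) :=
  ⟨UltrametricTree.coalescenceEquiv hk, fun _ _ => rfl⟩

end
end

section
/- Let (X, d) be a metric space with a distinguished point ρ and μ a finite Borel measure on X × E for a metric space E. Define the height h(X, d, ρ, μ) = sup{ d(ρ, x) : (x, e) ∈ supp μ }. If a sequence of marked metric measure spaces X_n converges to X in the marked Gromov-weak topology (i.e., all polynomial test functionals converge) and h(X_n) ≤ t for all n, then h(X) ≤ t. Equivalently, the height functional is lower semi-continuous with respect to Gromov-weak convergence. -/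
open MeasureTheory Filter Topology

noncomputable section

/-! The height condition `μ {t < d(ρ, x)} = 0` is equivalent to the vanishing of the
integral of `clampedExcess t (d(ρ, x))`, a bounded continuous nonnegative function of the
distance to the root that is positive exactly on `{t < d(ρ, x)}`. With one sampled point
this integral is a polynomial functional, so it passes to the Gromov-weak limit; being `0`
along the sequence, it is `0` in the limit. -/

/-- The `(k+1) × (k+1)` matrix of pairwise distances between the root `ρ` (index `0`)
and `k` sampled points. -/
def distMat {X : Type*} [PseudoMetricSpace X] (ρ : X) {k : ℕ} (u : Fin k → X)
    (i j : Fin (k + 1)) : ℝ :=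
  dist (Fin.cases (motive := fun _ => X) ρ u i) (Fin.cases (motive := fun _ => X) ρ u j)

def clampedExcess (t s : ℝ) : ℝ :=
  min 1 (max 0 (s - t))

lemma continuous_clampedExcess (t : ℝ) : Continuous (clampedExcess t) := by
  unfold clampedExcess; fun_prop

lemma clampedExcess_nonneg (t s : ℝ) : 0 ≤ clampedExcess t s :=
  le_min zero_le_one (le_max_left _ _)

lemma abs_clampedExcess_le_one (t s : ℝ) : |clampedExcess t s| ≤ 1 := by
  rw [abs_of_nonneg (clampedExcess_nonneg t s)]
  exact min_le_left _ _

lemma clampedExcess_ne_zero_iff {t s : ℝ} : clampedExcess t s ≠ 0 ↔ t < s := by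
  unfold clampedExcess
  constructor
  · contrapose!
    intro hst
    simp [max_eq_left (sub_nonpos.mpr hst)]
  · intro hts
    exact (lt_min one_pos (lt_max_of_lt_right (sub_pos.mpr hts))).ne'

lemma integral_clampedExcess_comp_eq_zero_iff {α : Type*} [MeasurableSpace α]
    {μ : Measure α} [IsFiniteMeasure μ] {h : α → ℝ} (hh : Measurable h) (t : ℝ) :
    ∫ x, clampedExcess t (h x) ∂μ = 0 ↔ μ {x | t < h x} = 0 := by
  have hint : Integrable (fun x => clampedExcess t (h x)) μ :=
    .of_bound ((continuous_clampedExcess t).measurable.comp hh).aestronglyMeasurable 1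
      (.of_forall fun x => abs_clampedExcess_le_one t (h x))
  rw [integral_eq_zero_iff_of_nonneg (fun x => clampedExcess_nonneg t (h x)) hint,
    EventuallyEq, ae_iff]
  simp only [Pi.zero_apply, clampedExcess_ne_zero_iff]

lemma integral_pi_unique {ι α F : Type*} [Unique ι] [MeasurableSpace α]
    [NormedAddCommGroup F] [NormedSpace ℝ F] (μ : Measure α) (g : α → F) :
    ∫ u : ι → α, g (u default) ∂(Measure.pi fun _ => μ) = ∫ x, g x ∂μ :=
  (measurePreserving_funUnique μ ι).integral_comp' g

lemma measurable_dist_fst {α β : Type*} [PseudoMetricSpace α] [MeasurableSpace α]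
    [OpensMeasurableSpace α] [MeasurableSpace β] (a : α) :
    Measurable fun p : α × β => dist a p.1 :=
  (continuous_const.dist continuous_id).measurable.comp measurable_fst

theorem height_lowerSemicontinuous_gromovWeak_general
    {E : Type*} [MetricSpace E] [MeasurableSpace E]
    (X : ℕ → Type*) [∀ n, MetricSpace (X n)] [∀ n, MeasurableSpace (X n)]
    [∀ n, BorelSpace (X n)]
    (ρ : ∀ n, X n) (μ : ∀ n, Measure (X n × E)) [∀ n, IsFiniteMeasure (μ n)]
    (Y : Type*) [MetricSpace Y] [MeasurableSpace Y] [BorelSpace Y]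
    (ρ' : Y) (ν : Measure (Y × E)) [IsFiniteMeasure ν]
    (hconv : ∀ (k : ℕ) (φ : ((Fin (k + 1) → Fin (k + 1) → ℝ) × (Fin k → E)) → ℝ),
      Continuous φ → (∃ M, ∀ p, |φ p| ≤ M) →
      Filter.Tendsto
        (fun n => ∫ u : Fin k → X n × E,
          φ (distMat (ρ n) fun l => (u l).1, fun l => (u l).2)
            ∂(Measure.pi fun _ : Fin k => μ n))
        Filter.atTop
        (nhds (∫ u : Fin k → Y × E,
          φ (distMat ρ' fun l => (u l).1, fun l => (u l).2)
            ∂(Measure.pi fun _ : Fin k => ν))))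
    (t : ℝ)
    (hn : ∀ n, μ n {p : X n × E | t < dist (ρ n) p.1} = 0) :
    ν {p : Y × E | t < dist ρ' p.1} = 0 := by
  have hlim : Tendsto (fun n => ∫ p, clampedExcess t (dist (ρ n) p.1) ∂μ n) atTop
      (𝓝 (∫ p, clampedExcess t (dist ρ' p.1) ∂ν)) := by
    convert hconv 1 (fun p => clampedExcess t (p.1 0 1))
      ((continuous_clampedExcess t).comp (by fun_prop))
      ⟨1, fun p => abs_clampedExcess_le_one _ _⟩ using 2 with n
    · exact (integral_pi_unique (μ n) fun p => clampedExcess t (dist (ρ n) p.1)).symm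
    · exact (integral_pi_unique ν fun p => clampedExcess t (dist ρ' p.1)).symm
  have hzero n : ∫ p, clampedExcess t (dist (ρ n) p.1) ∂μ n = 0 :=
    (integral_clampedExcess_comp_eq_zero_iff (measurable_dist_fst (ρ n)) t).2 (hn n)
  rw [← integral_clampedExcess_comp_eq_zero_iff (measurable_dist_fst ρ') t]
  exact tendsto_nhds_unique hlim (tendsto_const_nhds.congr fun n => (hzero n).symm)

/-- **Lower semicontinuity of the height for marked Gromov-weak convergence.**
Let `(Xₙ, dₙ, ρₙ, μₙ)` be pointed marked metric measure spaces (finite measures on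
`Xₙ × E`) converging to `(Y, d, ρ', ν)` in the marked Gromov-weak sense: all polynomial
functionals, i.e. integrals against bounded continuous functions of the matrix of pairwise
distances among `k` sampled points and the root together with the marks, converge.
If the height of each `Xₙ` is at most `t` (the measure of the set of points at distance
`> t` from the root vanishes), then the height of the limit is at most `t`. -/
theorem height_lowerSemicontinuous_gromovWeak
    {E : Type*} [MetricSpace E] [MeasurableSpace E] [BorelSpace E]
    (X : ℕ → Type*) [∀ n, MetricSpace (X n)] [∀ n, MeasurableSpace (X n)]
    [∀ n, BorelSpace (X n)]
    (ρ : ∀ n, X n) (μ : ∀ n, Measure (X n × E)) [∀ n, IsFiniteMeasure (μ n)]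
    (Y : Type*) [MetricSpace Y] [MeasurableSpace Y] [BorelSpace Y]
    (ρ' : Y) (ν : Measure (Y × E)) [IsFiniteMeasure ν]
    (hconv : ∀ (k : ℕ) (φ : ((Fin (k + 1) → Fin (k + 1) → ℝ) × (Fin k → E)) → ℝ),
      Continuous φ → (∃ M, ∀ p, |φ p| ≤ M) →
      Filter.Tendsto
        (fun n => ∫ u : Fin k → X n × E,
          φ (distMat (ρ n) fun l => (u l).1, fun l => (u l).2)
            ∂(Measure.pi fun _ : Fin k => μ n))
        Filter.atTop
        (nhds (∫ u : Fin k → Y × E,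
          φ (distMat ρ' fun l => (u l).1, fun l => (u l).2)
            ∂(Measure.pi fun _ : Fin k => ν))))
    (t : ℝ)
    (hn : ∀ n, μ n {p : X n × E | t < dist (ρ n) p.1} = 0) :
    ν {p : Y × E | t < dist ρ' p.1} = 0 :=
  height_lowerSemicontinuous_gromovWeak_general X ρ μ Y ρ' ν hconv t hn

end
end

section
/- For the distance-matrix map on continuous trees: given θ = (ℓ, b) ∈ T_{k,c} (so b_i < min(ℓ_i, ℓ_{i+1})), define D_{0j}(θ) = ℓ_j, D_{ij}(θ) = ℓ_i + ℓ_j − min{b_i, ..., b_{j-1}} for 1 ≤ i < j ≤ k, D symmetric with zero diagonal. Then D(θ) is a genuine distance matrix: it satisfies all triangle inequalities D_{ij} ≤ D_{ip} + D_{pj} for 0 ≤ i, j, p ≤ k. -/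
/-!
Write `D i j = h i + h j - g i j` for `i ≠ j`, where `h` is the height of a vertex (`0` at the
root) and `g` the height of the most recent common ancestor (`0` as soon as the root is
involved). The leaf range between `i` and `j` is covered by those between `i, p` and `p, j`,
so `min (g i p) (g p j) ≤ g i j`; and a branch point adjacent to leaf `p` lies below it, so
`g i p ≤ h p`. Hence `g i p + g p j = min + max ≤ g i j + h p ≤ g i j + 2 h p`, which is the
triangle inequality.
-/

noncomputable section

/-- The distance matrix of the continuous tree with leaf heights `ℓ` and branch point
heights `b` (index `0` is the root, index `j ≥ 1` the `j`-th leaf):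
`D 0 j = ℓ_j` and `D i j = ℓ_i + ℓ_j − min {b_i, …, b_{j-1}}` for `1 ≤ i < j`
(here written 0-indexed), extended symmetrically with zero diagonal. -/
def Dmat (ℓ b : ℕ → ℝ) (i j : ℕ) : ℝ :=
  if i = j then 0
  else if i = 0 then ℓ (j - 1)
  else if j = 0 then ℓ (i - 1)
  else ℓ (i - 1) + ℓ (j - 1) - sInf (b '' Set.Icc (min i j - 1) (max i j - 2))

theorem min_csInf_image_le_of_subset_union {α β : Type*} [ConditionallyCompleteLinearOrder β]
    {f : α → β} {s t u : Set α} (hs : s.Finite) (ht : t.Finite) (hu : u.Nonempty)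
    (hsub : u ⊆ s ∪ t) : min (sInf (f '' s)) (sInf (f '' t)) ≤ sInf (f '' u) := by
  refine le_csInf (hu.image f) ?_
  rintro _ ⟨x, hx, rfl⟩
  rcases hsub hx with hxs | hxt
  · exact (min_le_left _ _).trans (csInf_le (hs.image f).bddBelow ⟨x, hxs, rfl⟩)
  · exact (min_le_right _ _).trans (csInf_le (ht.image f).bddBelow ⟨x, hxt, rfl⟩)

def vertexHeight (ℓ : ℕ → ℝ) (i : ℕ) : ℝ :=
  if i = 0 then 0 else ℓ (i - 1)

/-- Meaningful only for `i ≠ j`; for two leaves `i < j` it is `min {b_i, …, b_{j-1}}` in the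
1-indexed notation of the paper. -/
def mrcaHeight (b : ℕ → ℝ) (i j : ℕ) : ℝ :=
  if i = 0 ∨ j = 0 then 0 else sInf (b '' Set.Icc (min i j - 1) (max i j - 2))

section

variable {k : ℕ} {ℓ b : ℕ → ℝ} {i j p : ℕ}

theorem vertexHeight_nonneg (hℓ : ∀ i, i < k → 0 ≤ ℓ i) (hik : i ≤ k) :
    0 ≤ vertexHeight ℓ i := by
  unfold vertexHeight
  split_ifs
  · exact le_rfl
  · exact hℓ _ (by omega)

theorem mrcaHeight_comm (b : ℕ → ℝ) (i j : ℕ) : mrcaHeight b i j = mrcaHeight b j i := by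
  simp only [mrcaHeight, or_comm, min_comm, max_comm]

theorem mrcaHeight_nonneg (hb : ∀ i, i + 1 < k → 0 ≤ b i) (hij : i ≠ j) (hik : i ≤ k)
    (hjk : j ≤ k) : 0 ≤ mrcaHeight b i j := by
  unfold mrcaHeight
  split_ifs
  · exact le_rfl
  · refine Real.sInf_nonneg ?_
    rintro _ ⟨t, ht, rfl⟩
    exact hb t (by rw [Set.mem_Icc] at ht; omega)

theorem mrcaHeight_le_vertexHeight_right (hℓ : ∀ i, i < k → 0 ≤ ℓ i)
    (hbl : ∀ i, i + 1 < k → b i < min (ℓ i) (ℓ (i + 1))) (hij : i ≠ j) (hik : i ≤ k)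
    (hjk : j ≤ k) : mrcaHeight b i j ≤ vertexHeight ℓ j := by
  by_cases h0 : i = 0 ∨ j = 0
  · rw [mrcaHeight, if_pos h0]
    exact vertexHeight_nonneg hℓ hjk
  rw [not_or] at h0
  rw [mrcaHeight, if_neg (not_or.2 h0), vertexHeight, if_neg h0.2]
  -- the branch point next to leaf `j`, on the side of leaf `i`
  obtain ⟨t, ht, hbt⟩ : ∃ t ∈ Set.Icc (min i j - 1) (max i j - 2), b t < ℓ (j - 1) := by
    rcases hij.lt_or_gt with hlt | hgt
    · refine ⟨j - 2, Set.mem_Icc.2 ⟨by omega, by omega⟩, ?_⟩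
      have hb := (hbl (j - 2) (by omega)).trans_le (min_le_right _ _)
      rwa [show j - 2 + 1 = j - 1 by omega] at hb
    · exact ⟨j - 1, Set.mem_Icc.2 ⟨by omega, by omega⟩,
        (hbl (j - 1) (by omega)).trans_le (min_le_left _ _)⟩
  exact (csInf_le ((Set.finite_Icc _ _).image b).bddBelow ⟨t, ht, rfl⟩).trans hbt.le

theorem min_mrcaHeight_le (hb : ∀ i, i + 1 < k → 0 ≤ b i) (hij : i ≠ j) (hik : i ≤ k)
    (hjk : j ≤ k) : min (mrcaHeight b i p) (mrcaHeight b p j) ≤ mrcaHeight b i j := by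
  by_cases h0 : i = 0 ∨ j = 0 ∨ p = 0
  · rcases h0 with rfl | rfl | rfl
    · simp [mrcaHeight]
    · simp [mrcaHeight]
    · simpa [mrcaHeight] using mrcaHeight_nonneg hb hij hik hjk
  simp only [not_or] at h0
  simp only [mrcaHeight, h0, or_self, if_false]
  refine min_csInf_image_le_of_subset_union (Set.finite_Icc _ _) (Set.finite_Icc _ _)
    ⟨min i j - 1, Set.mem_Icc.2 ⟨le_rfl, by omega⟩⟩ ?_
  intro t
  simp only [Set.mem_union, Set.mem_Icc]
  omega

theorem mrcaHeight_add_mrcaHeight_le (hℓ : ∀ i, i < k → 0 ≤ ℓ i)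
    (hb : ∀ i, i + 1 < k → 0 ≤ b i) (hbl : ∀ i, i + 1 < k → b i < min (ℓ i) (ℓ (i + 1)))
    (hij : i ≠ j) (hip : i ≠ p) (hpj : p ≠ j) (hik : i ≤ k) (hjk : j ≤ k) (hpk : p ≤ k) :
    mrcaHeight b i p + mrcaHeight b p j ≤ mrcaHeight b i j + 2 * vertexHeight ℓ p := by
  have hip_le : mrcaHeight b i p ≤ vertexHeight ℓ p :=
    mrcaHeight_le_vertexHeight_right hℓ hbl hip hik hpk
  have hpj_le : mrcaHeight b p j ≤ vertexHeight ℓ p := by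
    rw [mrcaHeight_comm]
    exact mrcaHeight_le_vertexHeight_right hℓ hbl hpj.symm hjk hpk
  calc mrcaHeight b i p + mrcaHeight b p j
      = min (mrcaHeight b i p) (mrcaHeight b p j) + max (mrcaHeight b i p) (mrcaHeight b p j) :=
        (min_add_max _ _).symm
    _ ≤ mrcaHeight b i j + vertexHeight ℓ p :=
        add_le_add (min_mrcaHeight_le hb hij hik hjk) (max_le hip_le hpj_le)
    _ ≤ mrcaHeight b i j + 2 * vertexHeight ℓ p := by linarith [vertexHeight_nonneg hℓ hpk]

theorem Dmat_self (ℓ b : ℕ → ℝ) (i : ℕ) : Dmat ℓ b i i = 0 := by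
  simp [Dmat]

theorem Dmat_of_ne (hij : i ≠ j) :
    Dmat ℓ b i j = vertexHeight ℓ i + vertexHeight ℓ j - mrcaHeight b i j := by
  unfold Dmat vertexHeight mrcaHeight
  split_ifs <;> simp_all

theorem Dmat_nonneg (hℓ : ∀ i, i < k → 0 ≤ ℓ i)
    (hbl : ∀ i, i + 1 < k → b i < min (ℓ i) (ℓ (i + 1))) (hik : i ≤ k) (hjk : j ≤ k) :
    0 ≤ Dmat ℓ b i j := by
  obtain rfl | hij := eq_or_ne i j
  · rw [Dmat_self]
  rw [Dmat_of_ne hij]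
  linarith [vertexHeight_nonneg hℓ hik, mrcaHeight_le_vertexHeight_right hℓ hbl hij hik hjk]

end

theorem distance_matrix_triangle_general (k : ℕ) (ℓ b : ℕ → ℝ)
    (hℓ : ∀ i, i < k → 0 ≤ ℓ i) (hb : ∀ i, i + 1 < k → 0 ≤ b i)
    (hbl : ∀ i, i + 1 < k → b i < min (ℓ i) (ℓ (i + 1))) :
    ∀ i j p, i ≤ k → j ≤ k → p ≤ k →
      Dmat ℓ b i j ≤ Dmat ℓ b i p + Dmat ℓ b p j := by
  intro i j p hik hjk hpk
  obtain rfl | hij := eq_or_ne i j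
  · rw [Dmat_self]
    exact add_nonneg (Dmat_nonneg hℓ hbl hik hpk) (Dmat_nonneg hℓ hbl hpk hik)
  obtain rfl | hip := eq_or_ne i p
  · rw [Dmat_self, zero_add]
  obtain rfl | hpj := eq_or_ne p j
  · rw [Dmat_self, add_zero]
  rw [Dmat_of_ne hij, Dmat_of_ne hip, Dmat_of_ne hpj]
  linarith [mrcaHeight_add_mrcaHeight_le hℓ hb hbl hij hip hpj hik hjk hpk]

/-- **The tree parameters give a genuine distance matrix.** For `(ℓ, b)` with
`0 ≤ b_i < min (ℓ_i, ℓ_{i+1})` and `ℓ ≥ 0`, the matrix `D(θ)` of pairwise distances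
between the root and the `k` leaves satisfies all triangle inequalities
`D_{ij} ≤ D_{ip} + D_{pj}` for `0 ≤ i, j, p ≤ k`. -/
theorem distance_matrix_triangle (k : ℕ) (hk : 1 ≤ k) (ℓ b : ℕ → ℝ)
    (hℓ : ∀ i, i < k → 0 ≤ ℓ i) (hb : ∀ i, i + 1 < k → 0 ≤ b i)
    (hbl : ∀ i, i + 1 < k → b i < min (ℓ i) (ℓ (i + 1))) :
    ∀ i j p, i ≤ k → j ≤ k → p ≤ k →
      Dmat ℓ b i j ≤ Dmat ℓ b i p + Dmat ℓ b p j :=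
  distance_matrix_triangle_general k ℓ b hℓ hb hbl

end
end
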